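/- For each n ≥ 1 (with n > 1/R), the 'flat-measure' polar integral of the same function g_n equals 4π(ln R + ln n); in particular it tends to infinity as n → ∞, while ∫_{ℝ²}|g_n|² dξ stays bounded by 2πR. -/

import Mathlib

open MeasureTheory Real

/-- The unit vector of angle `θ` in `ℝ²`. -/
noncomputable def unitVec (θ : ℝ) : EuclideanSpace ℝ (Fin 2) :=
  (WithLp.equiv 2 (Fin 2 → ℝ)).symm ![Real.cos θ, Real.sin θ]

/-!
Along the ray `σ ↦ σω` the function `g_n²` is `σ⁻¹` on `[1/n, R]`, so without the Jacobian each ray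
contributes `log R + log n`, which diverges with `n`. With the Jacobian `σ` the radial integrand
becomes the indicator of `[1/n, R]`, and the integral over `ℝ²` is `2π(R - 1/n) ≤ 2πR`.
-/

open Set

lemma norm_unitVec (θ : ℝ) : ‖unitVec θ‖ = 1 := by
  rw [EuclideanSpace.norm_eq]
  simp [unitVec, Fin.sum_univ_two, sq_abs]

lemma norm_smul_unitVec {σ : ℝ} (hσ : 0 ≤ σ) (θ : ℝ) : ‖σ • unitVec θ‖ = σ := by
  rw [norm_smul, norm_unitVec, mul_one, norm_of_nonneg hσ]

lemma Real.rpow_neg_one_half_sq {y : ℝ} (hy : 0 ≤ y) : (y ^ (-(1 / 2) : ℝ)) ^ 2 = y⁻¹ := by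
  rw [← rpow_natCast, ← rpow_mul hy]
  norm_num [rpow_neg_one]

/-- `g_n = truncInvSqrt (1 / n) R ∘ ‖·‖`. -/
noncomputable def truncInvSqrt (a b r : ℝ) : ℝ :=
  if a ≤ r ∧ r ≤ b then r ^ (-(1 / 2) : ℝ) else 0

section truncInvSqrt

variable {a b r : ℝ}

lemma truncInvSqrt_sq_of_mem (ha : 0 ≤ a) (hr : r ∈ Icc a b) : truncInvSqrt a b r ^ 2 = r⁻¹ := by
  rw [truncInvSqrt, if_pos (mem_Icc.1 hr), rpow_neg_one_half_sq (ha.trans hr.1)]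

lemma truncInvSqrt_of_notMem (hr : r ∉ Icc a b) : truncInvSqrt a b r = 0 :=
  if_neg (mt mem_Icc.2 hr)

lemma mul_truncInvSqrt_sq (ha : 0 < a) (r : ℝ) :
    r * truncInvSqrt a b r ^ 2 = (Icc a b).indicator 1 r := by
  by_cases hr : r ∈ Icc a b
  · rw [truncInvSqrt_sq_of_mem ha.le hr, indicator_of_mem hr, Pi.one_apply,
      mul_inv_cancel₀ (ha.trans_le hr.1).ne']
  · rw [truncInvSqrt_of_notMem hr, indicator_of_notMem hr]
    ring

lemma integral_truncInvSqrt_norm_smul_unitVec_sq (ha : 0 < a) (hab : a ≤ b) (θ : ℝ) :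
    ∫ σ in a..b, truncInvSqrt a b ‖σ • unitVec θ‖ ^ 2 = log b - log a := by
  have hb : 0 < b := ha.trans_le hab
  calc ∫ σ in a..b, truncInvSqrt a b ‖σ • unitVec θ‖ ^ 2
      = ∫ σ in a..b, σ⁻¹ := by
        refine intervalIntegral.integral_congr fun σ hσ => ?_
        rw [uIcc_of_le hab] at hσ
        rw [norm_smul_unitVec (ha.le.trans hσ.1), truncInvSqrt_sq_of_mem ha.le hσ]
    _ = log b - log a := by
        rw [integral_inv_of_pos ha hb, log_div hb.ne' ha.ne']

lemma integral_fun_norm_euclideanSpace_fin_two {F : Type*} [NormedAddCommGroup F]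
    [NormedSpace ℝ F] (f : ℝ → F) :
    ∫ ξ : EuclideanSpace ℝ (Fin 2), f ‖ξ‖ = (2 * π) • ∫ y in Ioi (0 : ℝ), y • f y := by
  rw [integral_fun_norm_addHaar volume f, finrank_euclideanSpace_fin, measureReal_def,
    EuclideanSpace.volume_ball_fin_two]
  simp [ENNReal.toReal_ofReal pi_pos.le, mul_smul, ← Nat.cast_smul_eq_nsmul ℝ]

lemma integral_truncInvSqrt_norm_sq (ha : 0 < a) (hab : a ≤ b) :
    ∫ ξ : EuclideanSpace ℝ (Fin 2), truncInvSqrt a b ‖ξ‖ ^ 2 = 2 * π * (b - a) := by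
  have hIcc : Icc a b ⊆ Ioi 0 := fun r hr => ha.trans_le hr.1
  rw [integral_fun_norm_euclideanSpace_fin_two (fun r => truncInvSqrt a b r ^ 2)]
  simp only [smul_eq_mul, mul_truncInvSqrt_sq ha]
  rw [integral_indicator_one measurableSet_Icc, measureReal_restrict_apply measurableSet_Icc,
    inter_eq_left.2 hIcc, Real.volume_real_Icc_of_le hab]

end truncInvSqrt

/-- For `g_n(ξ) = |ξ|^{-1/2}·1_{1/n ≤ |ξ| ≤ R}`, the "flat-measure" polar integral
`2∫_{S¹}∫_{1/n}^R |g_n(σω)|² dσ dω` equals `4π(ln R + ln n)`; this tends to infinity with `n`,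
while the true `L²(ℝ²)` norm of `g_n` stays bounded by `2πR`. -/
theorem radon_counterexample_flat_polar_integral (R : ℝ) (hR : 0 < R) :
    (∀ n : ℕ, 1 / R < (n : ℝ) →
      2 * ∫ θ in (0 : ℝ)..(2 * π), ∫ σ in (1 / (n : ℝ))..R,
          (if 1 / (n : ℝ) ≤ ‖σ • unitVec θ‖ ∧ ‖σ • unitVec θ‖ ≤ R
            then ‖σ • unitVec θ‖ ^ (-(1 / 2) : ℝ) else 0) ^ 2
        = 4 * π * (Real.log R + Real.log n)) ∧
    Filter.Tendsto (fun n : ℕ => 4 * π * (Real.log R + Real.log n))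
      Filter.atTop Filter.atTop ∧
    (∀ n : ℕ, 1 / R < (n : ℝ) →
      ∫ ξ : EuclideanSpace ℝ (Fin 2),
        (if 1 / (n : ℝ) ≤ ‖ξ‖ ∧ ‖ξ‖ ≤ R then ‖ξ‖ ^ (-(1 / 2) : ℝ) else 0) ^ 2
        ≤ 2 * π * R) := by
  have one_div_bounds {n : ℕ} (hn : 1 / R < n) : 0 < 1 / (n : ℝ) ∧ 1 / (n : ℝ) ≤ R :=
    have hn0 : (0 : ℝ) < n := (one_div_pos.2 hR).trans hn
    ⟨one_div_pos.2 hn0, ((one_div_lt hR hn0).1 hn).le⟩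
  simp only [← truncInvSqrt.eq_1]
  refine ⟨fun n hn => ?_, ?_, fun n hn => ?_⟩
  · obtain ⟨hn0, hnR⟩ := one_div_bounds hn
    simp only [integral_truncInvSqrt_norm_smul_unitVec_sq hn0 hnR, intervalIntegral.integral_const,
      smul_eq_mul]
    rw [one_div, log_inv]
    ring
  · refine Filter.Tendsto.const_mul_atTop (by positivity) ?_
    exact Filter.tendsto_atTop_add_const_left _ _
      (tendsto_log_atTop.comp tendsto_natCast_atTop_atTop)
  · obtain ⟨hn0, hnR⟩ := one_div_bounds hn
    rw [integral_truncInvSqrt_norm_sq hn0 hnR]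
    exact mul_le_mul_of_nonneg_left (sub_le_self R hn0.le) (by positivity)
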